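/- Let b, c ∈ F with b ≠ 0. Then the equation a b⁴ + a⁴ b = b⁵ (c + c²) has exactly 2 solutions a ∈ F. -/

import Mathlib

/-!
In characteristic 2 the map `L_b : a ↦ a b⁴ + a⁴ b` is additive, so the solution set of
`L_b a = r` is either empty or a coset of `ker L_b`. Factoring `L_b a = a b (a³ + b³)` and using
that cubing is a bijection of `GF(8)` (its inverse is `x ↦ x⁵`, since `x⁸ = x`) gives
`ker L_b = {0, b}`. And `a = b (c + c⁴)` is a solution, because `c¹⁶ = c²`.
-/

/-- `F` is the field `GF(8)` with 8 elements (characteristic 2). -/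
noncomputable abbrev F : Type := GaloisField 2 3

theorem AddMonoidHom.ncard_fiber_eq_ncard_ker {G H : Type*} [AddGroup G] [AddGroup H]
    (f : G →+ H) (p : G) : {a | f a = f p}.ncard = (f.ker : Set G).ncard := by
  have fiber_eq : {a | f a = f p} = (p + ·) '' f.ker := by
    ext a
    refine ⟨fun ha => ⟨-p + a, ?_, add_neg_cancel_left p a⟩, ?_⟩
    · change f a = f p at ha
      simp [ha]
    · rintro ⟨k, hk, rfl⟩
      simp_all [AddMonoidHom.mem_ker]
  rw [fiber_eq, Set.ncard_image_of_injective _ (add_right_injective p)]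

def linearizedMap {R : Type*} [CommSemiring R] [ExpChar R 2] (b : R) : R →+ R where
  toFun a := a * b ^ 4 + a ^ 4 * b
  map_zero' := by simp
  map_add' x y := by
    rw [show (4 : ℕ) = 2 ^ 2 from rfl, add_pow_expChar_pow]
    ring

theorem linearizedMap_apply {R : Type*} [CommSemiring R] [ExpChar R 2] (b a : R) :
    linearizedMap b a = a * b ^ 4 + a ^ 4 * b := rfl

theorem linearizedMap_eq_zero_iff {K : Type*} [Field K] [CharP K 2] {a b : K} (hb : b ≠ 0) :
    linearizedMap b a = 0 ↔ a = 0 ∨ a ^ 3 = b ^ 3 := by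
  rw [linearizedMap_apply, show a * b ^ 4 + a ^ 4 * b = a * b * (a ^ 3 + b ^ 3) by ring,
    mul_eq_zero, mul_eq_zero, add_eq_zero_iff_eq_neg, CharTwo.neg_eq]
  simp [hb]

theorem F.pow_eight (x : F) : x ^ 8 = x := by
  have : Fintype F := Fintype.ofFinite F
  have := FiniteField.pow_card x
  rwa [Fintype.card_eq_nat_card, GaloisField.card 2 3 (by norm_num)] at this

theorem F.pow_three_injective : Function.Injective (fun x : F => x ^ 3) := by
  have cube_pow_five (x : F) : (x ^ 3) ^ 5 = x := by
    calc (x ^ 3) ^ 5 = x ^ 8 * x ^ 7 := by ring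
    _ = x * x ^ 7 := by rw [F.pow_eight]
    _ = x := by rw [← pow_succ', F.pow_eight]
  intro x y hxy
  rw [← cube_pow_five x, ← cube_pow_five y]
  exact congrArg (· ^ 5) hxy

theorem F.ker_linearizedMap {b : F} (hb : b ≠ 0) : ((linearizedMap b).ker : Set F) = {0, b} := by
  ext a
  simp [AddMonoidHom.mem_ker, linearizedMap_eq_zero_iff hb, F.pow_three_injective.eq_iff]

theorem F.linearizedMap_mul_add_pow_four (b c : F) :
    linearizedMap b (b * (c + c ^ 4)) = b ^ 5 * (c + c ^ 2) := by
  have pow_sixteen : c ^ 16 = c ^ 2 := by rw [show 16 = 8 * 2 from rfl, pow_mul, F.pow_eight]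
  rw [linearizedMap_apply, mul_pow, show (4 : ℕ) = 2 ^ 2 from rfl, add_pow_char_pow]
  linear_combination b ^ 5 * pow_sixteen + b ^ 5 * c ^ 4 * (CharTwo.two_eq_zero (R := F))

/-- For `b ≠ 0` and any `c` in `F`, the equation `a b⁴ + a⁴ b = b⁵ (c + c²)` has
exactly 2 solutions `a ∈ F`. -/
theorem two_solutions (b c : F) (hb : b ≠ 0) :
    Set.ncard {a : F | a * b ^ 4 + a ^ 4 * b = b ^ 5 * (c + c ^ 2)} = 2 := by
  rw [← F.linearizedMap_mul_add_pow_four b c]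
  change {a | linearizedMap b a = linearizedMap b _}.ncard = 2
  rw [AddMonoidHom.ncard_fiber_eq_ncard_ker, F.ker_linearizedMap hb, Set.ncard_pair hb.symm]
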